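/- Let φ(t) := (1/(4π)) ∫_{ℝ³} y₁² (|y − e₃|² + t⁻²)^{−3/2} (|y|² + t⁻²)^{−3/2} dy for t > 0, where e₃ = (0,0,1). Then for every ε > 0 and every x = (0, x₂, x₃) ∈ ℝ³ with x ≠ 0, (1/(16π²)) ∫_{ℝ³} (x₁ − y₁) y₁ (|x − y|² + ε²)^{−3/2} (|y|² + ε²)^{−3/2} dy = −(1/(4π|x|)) φ(|x|/ε); equivalently, since x₁ = 0, (1/(16π²)) ∫_{ℝ³} y₁² (|x − y|² + ε²)^{−3/2} (|y|² + ε²)^{−3/2} dy = φ(|x|/ε)/(4π|x|). -/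

import Mathlib

open MeasureTheory Real

noncomputable section

/-- The unit vector `e₃ = (0,0,1)` in `ℝ³`. -/
def e3 : EuclideanSpace ℝ (Fin 3) := EuclideanSpace.single 2 (1 : ℝ)

/-- `φ(t) := (1/(4π)) ∫_{ℝ³} y₁² (|y − e₃|² + t⁻²)^{−3/2} (|y|² + t⁻²)^{−3/2} dy`. -/
def phi (t : ℝ) : ℝ :=
  (1 / (4 * π)) * ∫ y : EuclideanSpace ℝ (Fin 3),
    (y 0) ^ 2 * ((‖y - e3‖ ^ 2 + (t⁻¹) ^ 2) ^ ((3 : ℝ) / 2))⁻¹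
      * ((‖y‖ ^ 2 + (t⁻¹) ^ 2) ^ ((3 : ℝ) / 2))⁻¹

abbrev E3 := EuclideanSpace ℝ (Fin 3)

def rotFun (a b : ℝ) (z : E3) : E3 :=
  (WithLp.equiv 2 (Fin 3 → ℝ)).symm ![z 0, b * z 1 + a * z 2, -a * z 1 + b * z 2]

lemma rotFun_apply0 (a b : ℝ) (z : E3) : rotFun a b z 0 = z 0 := rfl
lemma rotFun_apply1 (a b : ℝ) (z : E3) : rotFun a b z 1 = b * z 1 + a * z 2 := rfl
lemma rotFun_apply2 (a b : ℝ) (z : E3) : rotFun a b z 2 = -a * z 1 + b * z 2 := rfl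

lemma euclid_ext {z w : E3} (h0 : z 0 = w 0) (h1 : z 1 = w 1) (h2 : z 2 = w 2) : z = w := by
  ext i; fin_cases i <;> assumption

lemma norm3 (w : E3) : ‖w‖ = Real.sqrt (w 0 ^ 2 + w 1 ^ 2 + w 2 ^ 2) := by
  rw [EuclideanSpace.norm_eq, Fin.sum_univ_three]
  norm_num

lemma e3_apply0 : e3 0 = 0 := rfl
lemma e3_apply1 : e3 1 = 0 := rfl
lemma e3_apply2 : e3 2 = 1 := rfl

/-- Rotation in the `(x₂,x₃)`-plane of `ℝ³`, fixing the first coordinate. -/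
def rotLi (a b : ℝ) (hab : a ^ 2 + b ^ 2 = 1) : E3 ≃ₗᵢ[ℝ] E3 where
  toLinearEquiv :=
  { toFun := rotFun a b
    invFun := rotFun (-a) b
    left_inv := fun z => by
      apply euclid_ext <;>
        simp only [rotFun_apply0, rotFun_apply1, rotFun_apply2]
      · linear_combination (z 1) * hab
      · linear_combination (z 2) * hab
    right_inv := fun z => by
      apply euclid_ext <;>
        simp only [rotFun_apply0, rotFun_apply1, rotFun_apply2]
      · linear_combination (z 1) * hab
      · linear_combination (z 2) * hab
    map_add' := fun z w => by
      apply euclid_ext <;>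
        simp only [rotFun_apply0, rotFun_apply1, rotFun_apply2, PiLp.add_apply] <;> ring
    map_smul' := fun c z => by
      apply euclid_ext <;>
        simp only [rotFun_apply0, rotFun_apply1, rotFun_apply2, PiLp.smul_apply,
          smul_eq_mul, RingHom.id_apply] <;> ring }
  norm_map' := fun z => by
    show ‖rotFun a b z‖ = ‖z‖
    rw [norm3, norm3 z, rotFun_apply0, rotFun_apply1, rotFun_apply2]
    congr 1
    linear_combination (z 1 ^ 2 + z 2 ^ 2) * hab

lemma rotLi_apply (a b : ℝ) (hab : a ^ 2 + b ^ 2 = 1) (z : E3) :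
    rotLi a b hab z = rotFun a b z := rfl

lemma pow_scale {r ε : ℝ} (hr : 0 < r) (s : ℝ) :
    ((r * s) ^ 2 + ε ^ 2) ^ ((3 : ℝ) / 2)
      = r ^ 3 * ((s ^ 2 + (ε / r) ^ 2) ^ ((3 : ℝ) / 2)) := by
  have hr0 : r ≠ 0 := hr.ne'
  have h : (r * s) ^ 2 + ε ^ 2 = r ^ 2 * (s ^ 2 + (ε / r) ^ 2) := by field_simp
  rw [h, Real.mul_rpow (by positivity) (by positivity)]
  congr 1
  rw [← Real.rpow_natCast r 2, ← Real.rpow_mul hr.le, ← Real.rpow_natCast r 3]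
  norm_num

/-- Exact whole-space form of the self-convolution of `k̄₁^ε` at points `x = (0,x₂,x₃) ≠ 0`:
`(1/(16π²)) ∫ (x₁−y₁) y₁ (|x−y|²+ε²)^{−3/2} (|y|²+ε²)^{−3/2} dy = −(1/(4π|x|)) φ(|x|/ε)`,
equivalently (since `x₁ = 0`)
`(1/(16π²)) ∫ y₁² (|x−y|²+ε²)^{−3/2} (|y|²+ε²)^{−3/2} dy = φ(|x|/ε)/(4π|x|)`. -/
theorem selfconvolution_eq_phi (ε : ℝ) (hε : 0 < ε)
    (x : EuclideanSpace ℝ (Fin 3)) (hx1 : x 0 = 0) (hx : x ≠ 0) :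
    (1 / (16 * π ^ 2)) * (∫ y : EuclideanSpace ℝ (Fin 3),
        (x 0 - y 0) * y 0 * ((‖x - y‖ ^ 2 + ε ^ 2) ^ ((3 : ℝ) / 2))⁻¹
          * ((‖y‖ ^ 2 + ε ^ 2) ^ ((3 : ℝ) / 2))⁻¹)
      = -(1 / (4 * π * ‖x‖)) * phi (‖x‖ / ε) ∧
    (1 / (16 * π ^ 2)) * (∫ y : EuclideanSpace ℝ (Fin 3),
        (y 0) ^ 2 * ((‖x - y‖ ^ 2 + ε ^ 2) ^ ((3 : ℝ) / 2))⁻¹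
          * ((‖y‖ ^ 2 + ε ^ 2) ^ ((3 : ℝ) / 2))⁻¹)
      = phi (‖x‖ / ε) / (4 * π * ‖x‖) := by
  have hπ : (0 : ℝ) < π := Real.pi_pos
  have hr : 0 < ‖x‖ := norm_pos_iff.mpr hx
  set r : ℝ := ‖x‖ with hrdef
  have hr0 : r ≠ 0 := hr.ne'
  have hε0 : ε ≠ 0 := hε.ne'
  set a : ℝ := x 1 / r with hadef
  set b : ℝ := x 2 / r with hbdef
  have hr2 : r ^ 2 = x 0 ^ 2 + x 1 ^ 2 + x 2 ^ 2 := by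
    rw [hrdef, norm3, Real.sq_sqrt (by positivity)]
  have hx12 : x 1 ^ 2 + x 2 ^ 2 = r ^ 2 := by
    rw [hr2, hx1]; ring
  have hab : a ^ 2 + b ^ 2 = 1 := by
    rw [hadef, hbdef]
    field_simp
    linarith [hx12]
  set R := rotLi a b hab with hRdef
  have hRe3 : x = r • R e3 := by
    apply euclid_ext
    · rw [PiLp.smul_apply, hRdef, rotLi_apply, rotFun_apply0, e3_apply0, hx1,
        smul_eq_mul, mul_zero]
    · rw [PiLp.smul_apply, hRdef, rotLi_apply, rotFun_apply1, e3_apply1, e3_apply2,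
        smul_eq_mul, hadef]
      field_simp
      ring
    · rw [PiLp.smul_apply, hRdef, rotLi_apply, rotFun_apply2, e3_apply1, e3_apply2,
        smul_eq_mul, hbdef]
      field_simp
      ring
  -- The two integrands
  set H : E3 → ℝ := fun y =>
    (y 0) ^ 2 * ((‖x - y‖ ^ 2 + ε ^ 2) ^ ((3 : ℝ) / 2))⁻¹
      * ((‖y‖ ^ 2 + ε ^ 2) ^ ((3 : ℝ) / 2))⁻¹ with hHdef
  set G : E3 → ℝ := fun z =>
    (z 0) ^ 2 * ((‖z - e3‖ ^ 2 + (ε / r) ^ 2) ^ ((3 : ℝ) / 2))⁻¹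
      * ((‖z‖ ^ 2 + (ε / r) ^ 2) ^ ((3 : ℝ) / 2))⁻¹ with hGdef
  -- pointwise transformation
  have comp : ∀ z : E3, H (r • R z) = r⁻¹ ^ 4 * G z := by
    intro z
    have h0 : (r • R z) 0 = r * z 0 := by
      rw [PiLp.smul_apply, smul_eq_mul, hRdef, rotLi_apply, rotFun_apply0]
    have hn : ‖r • R z‖ = r * ‖z‖ := by
      rw [norm_smul, R.norm_map, Real.norm_eq_abs, abs_of_pos hr]
    have hxy : ‖x - r • R z‖ = r * ‖z - e3‖ := by
      calc ‖x - r • R z‖ = ‖r • R (e3 - z)‖ := by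
            rw [map_sub, smul_sub, ← hRe3]
        _ = r * ‖e3 - z‖ := by
            rw [norm_smul, R.norm_map, Real.norm_eq_abs, abs_of_pos hr]
        _ = r * ‖z - e3‖ := by rw [norm_sub_rev]
    simp only [hHdef, hGdef]
    rw [h0, hn, hxy, pow_scale hr, pow_scale hr, mul_inv, mul_inv]
    have h3 : (r ^ 3)⁻¹ = r⁻¹ ^ 3 := by rw [inv_pow]
    rw [h3]
    have hrr : r ^ 2 * (r⁻¹ ^ 3 * r⁻¹ ^ 3) = r⁻¹ ^ 4 := by
      field_simp
    calc (r * z 0) ^ 2 * (r⁻¹ ^ 3 * ((‖z - e3‖ ^ 2 + (ε / r) ^ 2) ^ ((3 : ℝ) / 2))⁻¹)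
          * (r⁻¹ ^ 3 * ((‖z‖ ^ 2 + (ε / r) ^ 2) ^ ((3 : ℝ) / 2))⁻¹)
        = (r ^ 2 * (r⁻¹ ^ 3 * r⁻¹ ^ 3)) * ((z 0) ^ 2
            * ((‖z - e3‖ ^ 2 + (ε / r) ^ 2) ^ ((3 : ℝ) / 2))⁻¹
            * ((‖z‖ ^ 2 + (ε / r) ^ 2) ^ ((3 : ℝ) / 2))⁻¹) := by ring
      _ = r⁻¹ ^ 4 * ((z 0) ^ 2
            * ((‖z - e3‖ ^ 2 + (ε / r) ^ 2) ^ ((3 : ℝ) / 2))⁻¹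
            * ((‖z‖ ^ 2 + (ε / r) ^ 2) ^ ((3 : ℝ) / 2))⁻¹) := by rw [hrr]
  -- change of variables
  have step1 : (∫ z : E3, H (r • R z)) = r⁻¹ ^ 4 * ∫ z : E3, G z := by
    simp only [comp]
    exact integral_const_mul _ _
  have step2 : (∫ z : E3, H (r • R z)) = ∫ w : E3, H (r • w) :=
    R.measurePreserving.integral_comp R.toHomeomorph.measurableEmbedding
      (fun w => H (r • w))
  have step3 : (∫ w : E3, H (r • w)) = (r ^ 3)⁻¹ * ∫ y : E3, H y := by
    rw [Measure.integral_comp_smul_of_nonneg volume H r (hR := hr.le)]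
    simp [finrank_euclideanSpace_fin, smul_eq_mul]
  have key : (∫ y : E3, H y) = r⁻¹ * ∫ z : E3, G z := by
    have h := step1.symm.trans (step2.trans step3)
    have h2 : (∫ y : E3, H y) = r ^ 3 * ((r ^ 3)⁻¹ * ∫ y : E3, H y) := by
      field_simp
    rw [h2, ← h]
    field_simp
  -- relate G to phi
  have hphi : (∫ z : E3, G z) = 4 * π * phi (r / ε) := by
    rw [phi, inv_div]
    rw [hGdef]
    field_simp
    congr 1
    funext z
    rw [mul_comm (‖z - e3‖ ^ 2)]
  constructor
  · have hneg : (∫ y : E3, (x 0 - y 0) * y 0 * ((‖x - y‖ ^ 2 + ε ^ 2) ^ ((3 : ℝ) / 2))⁻¹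
          * ((‖y‖ ^ 2 + ε ^ 2) ^ ((3 : ℝ) / 2))⁻¹) = - ∫ y : E3, H y := by
      rw [← integral_neg]
      congr 1
      funext y
      simp only [hHdef, hx1]
      ring
    rw [hneg, key, hphi]
    field_simp
    ring
  · show (1 / (16 * π ^ 2)) * (∫ y : E3, H y) = phi (r / ε) / (4 * π * r)
    rw [key, hphi]
    field_simp
    ring
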